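/- Let (E,T,S,e) be a conditional expectation preserving system with T strictly positive and S surjective (hence bijective, since TS = T with T strictly positive forces S injective). Then for every component q of e and every component p of q, p ≤ ⨆_{n≥1} S^{-n}q, where the supremum over n ∈ ℕ, n ≥ 1, exists in E because each S^{-n}q is a component of e. -/

import Mathlib

/-!
Let `s = ⨆_{n ≥ 1} S⁻ⁿ q`, again a component of `e`. The part `r = q - q ⊓ s` of `q` lying
outside `s` is disjoint from `s`, which contains every `S⁻ⁿ r` with `n ≥ 1`; hence the iterates
`S⁻ⁿ r` are pairwise disjoint, their partial sums stay below `e`, and applying `T` (which is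
`S⁻¹`-invariant) gives `N • T r ≤ T e` for all `N`. A Dedekind complete space is Archimedean,
so `T r = 0`, and strict positivity of `T` forces `r = 0`, i.e. `p ≤ q ≤ s`.
-/

noncomputable section

open Function Set

variable {E : Type*}

/-- `e` is a weak order unit: `e > 0` and `e ⊓ |x| = 0` implies `x = 0`. -/
def WeakOrderUnit [Lattice E] [AddCommGroup E] (e : E) : Prop :=
  0 < e ∧ ∀ x : E, e ⊓ (x ⊔ -x) = 0 → x = 0

/-- `p` is a component of `q ∈ E₊`: `0 ≤ p ≤ q` and `(q - p) ⊓ p = 0`. -/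
def IsComponent [Lattice E] [AddCommGroup E] (q p : E) : Prop :=
  0 ≤ p ∧ p ≤ q ∧ (q - p) ⊓ p = 0

/-- `partialSup f n = ⋁_{j < n} f j`, with the empty supremum equal to `0`. -/
def partialSup [Lattice E] [Zero E] (f : ℕ → E) : ℕ → E
  | 0 => 0
  | n + 1 => partialSup f n ⊔ f n

/-- The band projection of `e` onto the band generated by `g`: `P_g e = ⨆_{m ∈ ℕ} (e ⊓ m•g)`. -/
def bandProjApp [ConditionallyCompleteLattice E] [AddCommGroup E] (g e : E) : E :=
  ⨆ m : ℕ, e ⊓ m • g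

/-- `qComp Sinv e p k = p ⊓ S⁻ᵏp ⊓ (e - ⋁_{j=1}^{k-1} S⁻ʲp)` (empty supremum is `0`). -/
def qComp [Lattice E] [AddCommGroup E] (Sinv : E → E) (e p : E) (k : ℕ) : E :=
  p ⊓ Sinv^[k] p ⊓ (e - partialSup (fun j => Sinv^[j + 1] p) (k - 1))

/-- `(E,T,S,e)` is a conditional expectation preserving system: `E` is a Dedekind complete
Riesz space (typeclass assumptions), `e` is a weak order unit, `T` is a strictly positive
conditional expectation operator with `Te = e`, and `S` is an order-continuous Riesz
homomorphism with `Se = e` and `TS = T`. -/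
structure IsCEPS [ConditionallyCompleteLattice E] [AddCommGroup E] [Module ℝ E]
    (T S : E →ₗ[ℝ] E) (e : E) : Prop where
  unit : WeakOrderUnit e
  T_pos : ∀ f : E, 0 ≤ f → 0 ≤ T f
  T_strictPos : ∀ f : E, 0 ≤ f → T f = 0 → f = 0
  T_proj : ∀ f : E, T (T f) = T f
  T_ordCont : ∀ D : Set E, D.Nonempty → DirectedOn (· ≥ ·) D → IsGLB D 0 →
    IsGLB ((⇑T) '' D) 0
  T_range_sublattice : ∀ x ∈ Set.range T, ∀ y ∈ Set.range T, x ⊔ y ∈ Set.range T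
  T_range_dedekind : ∀ D : Set E, D ⊆ Set.range T → D.Nonempty →
    (∃ b ∈ Set.range T, ∀ x ∈ D, x ≤ b) →
    ∃ s ∈ Set.range T, (∀ x ∈ D, x ≤ s) ∧ ∀ b ∈ Set.range T, (∀ x ∈ D, x ≤ b) → s ≤ b
  T_weakUnit : ∀ u : E, WeakOrderUnit u → WeakOrderUnit (T u)
  Te : T e = e
  S_hom : ∀ x y : E, S (x ⊔ y) = S x ⊔ S y
  S_ordCont : ∀ D : Set E, D.Nonempty → DirectedOn (· ≥ ·) D → IsGLB D 0 →
    IsGLB ((⇑S) '' D) 0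
  Se : S e = e
  TS : ∀ f : E, T (S f) = T f

/-- `E` is `T`-universally complete: every upward directed subset `D` of `E₊` for which
`T '' D` is order bounded in `E` has a supremum in `E`. -/
def TUnivComplete [ConditionallyCompleteLattice E] [AddCommGroup E] [Module ℝ E]
    (T : E →ₗ[ℝ] E) : Prop :=
  ∀ D : Set E, D.Nonempty → D ⊆ {x : E | 0 ≤ x} → DirectedOn (· ≤ ·) D →
    BddAbove ((⇑T) '' D) → BddBelow ((⇑T) '' D) → ∃ s : E, IsLUB D s

/-- `(S, v)` is aperiodic (with `Sinv` the inverse of `S`): for every `N ∈ ℕ` and every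
nonzero component `c` of `v` there exist `k ≥ N` and a component `u` of `c` with
`q(u,k) ≠ 0`. -/
def IsAperiodic [Lattice E] [AddCommGroup E] (Sinv : E → E) (e v : E) : Prop :=
  ∀ N : ℕ, ∀ c : E, IsComponent v c → c ≠ 0 →
    ∃ k : ℕ, N ≤ k ∧ ∃ u : E, IsComponent c u ∧ qComp Sinv e u k ≠ 0

/-- `(S, e)` is periodic (with `Sinv` the inverse of `S`): there is `N ∈ ℕ` such that
`q(c,k) = 0` for all `k ≥ N` and all components `c` of `e` with `0 ≠ c ≠ e`. -/
def IsPeriodic [Lattice E] [AddCommGroup E] (Sinv : E → E) (e : E) : Prop :=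
  ∃ N : ℕ, ∀ c : E, IsComponent e c → c ≠ 0 → c ≠ e → ∀ k : ℕ, N ≤ k → qComp Sinv e c k = 0

theorem inf_eq_zero_mono {α : Type*} [Lattice α] [Zero α] {a b c d : α} (ha : 0 ≤ a)
    (hb : 0 ≤ b) (hac : a ≤ c) (hbd : b ≤ d) (h : c ⊓ d = 0) : a ⊓ b = 0 :=
  le_antisymm (h ▸ inf_le_inf hac hbd) (le_inf ha hb)

section LatticeOrderedGroup

variable {α : Type*} [Lattice α] [AddCommGroup α] [AddLeftMono α] {a b c e : α}

theorem add_eq_sup_of_inf_eq_zero (h : a ⊓ b = 0) : a + b = a ⊔ b := by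
  simpa [h] using (inf_add_sup a b).symm

theorem add_inf_eq_zero (hac : a ⊓ c = 0) (hbc : b ⊓ c = 0) : (a + b) ⊓ c = 0 := by
  have hb : 0 ≤ b := hbc ▸ inf_le_left
  have hc : 0 ≤ c := hbc ▸ inf_le_right
  have hle_b : (a + b) ⊓ c ≤ b := calc
    (a + b) ⊓ c ≤ (a + b) ⊓ (c + b) := inf_le_inf_left _ (le_add_of_nonneg_right hb)
    _ = b := by rw [← inf_add, hac, zero_add]
  exact le_antisymm (hbc ▸ le_inf hle_b inf_le_right)
    (le_inf (add_nonneg (hac ▸ inf_le_left) hb) hc)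

theorem sum_range_le_of_pairwise_inf_eq_zero {f : ℕ → α} (hf : ∀ n, 0 ≤ f n ∧ f n ≤ e)
    (hdisj : ∀ m n, m < n → f m ⊓ f n = 0) (N : ℕ) : ∑ n ∈ Finset.range N, f n ≤ e := by
  induction N with
  | zero => exact (hf 0).1.trans (hf 0).2
  | succ k ih =>
    have hk : (∑ n ∈ Finset.range k, f n) ⊓ f k = 0 :=
      Finset.sum_induction f (· ⊓ f k = 0) (fun _ _ => add_inf_eq_zero)
        (inf_eq_left.2 (hf k).1) fun n hn => hdisj n k (Finset.mem_range.1 hn)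
    rw [Finset.sum_range_succ, add_eq_sup_of_inf_eq_zero hk]
    exact sup_le ih (hf k).2

theorem inf_eq_zero_of_isLUB {ι : Type*} [Nonempty ι] {c : ι → α} {s : α}
    (hc : ∀ i, a ⊓ c i = 0) (hs : IsLUB (range c) s) : a ⊓ s = 0 := by
  obtain ⟨i₀⟩ := ‹Nonempty ι›
  have ha : 0 ≤ a := hc i₀ ▸ inf_le_left
  have hs0 : 0 ≤ s := (hc i₀ ▸ inf_le_right : 0 ≤ c i₀).trans (hs.1 (mem_range_self i₀))
  have hbound : s ≤ a ⊔ s - a := hs.2 <| forall_mem_range.2 fun i => by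
    rw [le_sub_iff_add_le', add_eq_sup_of_inf_eq_zero (hc i)]
    exact sup_le_sup_left (hs.1 (mem_range_self i)) a
  refine le_antisymm ?_ (le_inf ha hs0)
  rw [← add_le_add_iff_right (a ⊔ s), inf_add_sup, zero_add]
  exact le_sub_iff_add_le'.1 hbound

theorem IsComponent.of_isLUB {ι : Type*} [Nonempty ι] {c : ι → α} {s : α}
    (hc : ∀ i, IsComponent e (c i)) (hs : IsLUB (range c) s) : IsComponent e s := by
  obtain ⟨i₀⟩ := ‹Nonempty ι›
  have hse : s ≤ e := hs.2 (forall_mem_range.2 fun i => (hc i).2.1)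
  refine ⟨(hc i₀).1.trans (hs.1 (mem_range_self i₀)), hse,
    inf_eq_zero_of_isLUB (fun i => ?_) hs⟩
  exact inf_eq_zero_mono (sub_nonneg.2 hse) (hc i).1
    (sub_le_sub_left (hs.1 (mem_range_self i)) e) le_rfl (hc i).2.2

end LatticeOrderedGroup

theorem nonpos_of_forall_nsmul_le {α : Type*} [ConditionallyCompleteLattice α] [AddCommGroup α]
    [AddLeftMono α] {x e : α} (h : ∀ n : ℕ, n • x ≤ e) : x ≤ 0 := by
  have hbdd : BddAbove (range fun n : ℕ => n • x) := ⟨e, forall_mem_range.2 h⟩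
  have hshift : (⨆ n : ℕ, n • x) + x ≤ ⨆ n : ℕ, n • x := by
    rw [← le_sub_iff_add_le]
    exact ciSup_le fun n => le_sub_iff_add_le.2 (succ_nsmul x n ▸ le_ciSup hbdd (n + 1))
  simpa using hshift

theorem map_inf_of_map_sup {α F : Type*} [Lattice α] [AddCommGroup α] [AddLeftMono α]
    [FunLike F α α] [AddMonoidHomClass F α α] (f : F) (h : ∀ x y, f (x ⊔ y) = f x ⊔ f y)
    (x y : α) : f (x ⊓ y) = f x ⊓ f y := by
  apply add_right_cancel (b := f (x ⊔ y))
  rw [← map_add, inf_add_sup, map_add, h, inf_add_sup]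

section MapInf

variable {α F : Type*} [Lattice α] [AddCommGroup α] [FunLike F α α] [AddMonoidHomClass F α α]
  (R : F) {e : α}

theorem iterate_nonneg_of_map_inf (hR : ∀ x y, R (x ⊓ y) = R x ⊓ R y) {x : α} (hx : 0 ≤ x)
    (n : ℕ) : 0 ≤ R^[n] x := by
  simpa only [iterate_fixed (map_zero R)] using (Monotone.of_map_inf hR).iterate n hx

theorem IsComponent.map (hR : ∀ x y, R (x ⊓ y) = R x ⊓ R y) (hRe : R e = e) {x : α}
    (hx : IsComponent e x) : IsComponent e (R x) := by
  have hmono := Monotone.of_map_inf hR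
  obtain ⟨h0, hle, hdisj⟩ := hx
  refine ⟨map_zero R ▸ hmono h0, hRe ▸ hmono hle, ?_⟩
  rw [← hRe, ← map_sub, ← hR, hdisj, map_zero]

theorem IsComponent.iterate (hR : ∀ x y, R (x ⊓ y) = R x ⊓ R y) (hRe : R e = e) {x : α}
    (hx : IsComponent e x) (n : ℕ) : IsComponent e (R^[n] x) := by
  induction n with
  | zero => exact hx
  | succ n ih => rw [iterate_succ_apply']; exact ih.map R hR hRe

end MapInf

section Recurrence

variable {α F G : Type*} [ConditionallyCompleteLattice α] [AddCommGroup α] [AddLeftMono α]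
  [FunLike F α α] [AddMonoidHomClass F α α] [FunLike G α α] [AddMonoidHomClass G α α]
  (T : G) (R : F) {e : α}

theorem eq_zero_of_iterate_inf_eq_zero (hT_pos : ∀ x, 0 ≤ x → 0 ≤ T x)
    (hT_strict : ∀ x, 0 ≤ x → T x = 0 → x = 0) (hTR : ∀ x, T (R x) = T x)
    (hR : ∀ x y, R (x ⊓ y) = R x ⊓ R y) (hRe : R e = e) {r : α} (hr0 : 0 ≤ r) (hre : r ≤ e)
    (hwander : ∀ k, r ⊓ R^[k + 1] r = 0) : r = 0 := by
  have hT_mono : Monotone T := fun x y hxy =>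
    sub_nonneg.1 (map_sub T y x ▸ hT_pos _ (sub_nonneg.2 hxy))
  have hbounds : ∀ n, 0 ≤ R^[n] r ∧ R^[n] r ≤ e := fun n =>
    ⟨iterate_nonneg_of_map_inf R hR hr0 n,
      iterate_fixed hRe n ▸ (Monotone.of_map_inf hR).iterate n hre⟩
  have hdisj : ∀ m n, m < n → R^[m] r ⊓ R^[n] r = 0 := by
    intro m n hmn
    obtain ⟨k, rfl⟩ := Nat.exists_eq_add_of_lt hmn
    rw [add_assoc, iterate_add_apply, ← Semiconj₂.iterate hR m, hwander,
      iterate_fixed (map_zero R)]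
  have hTiter : ∀ n, T (R^[n] r) = T r := fun n => by
    simpa using (Semiconj.iterate_right (f := T) (ga := R) (gb := id) hTR n) r
  have hnsmul : ∀ N : ℕ, N • T r ≤ T e := fun N => calc
    N • T r = T (∑ n ∈ Finset.range N, R^[n] r) := by simp [map_sum, hTiter]
    _ ≤ T e := hT_mono (sum_range_le_of_pairwise_inf_eq_zero hbounds hdisj N)
  exact hT_strict r hr0 (le_antisymm (nonpos_of_forall_nsmul_le hnsmul) (hT_pos r hr0))

theorem IsComponent.le_of_isLUB_iterate (hT_pos : ∀ x, 0 ≤ x → 0 ≤ T x)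
    (hT_strict : ∀ x, 0 ≤ x → T x = 0 → x = 0) (hTR : ∀ x, T (R x) = T x)
    (hR : ∀ x y, R (x ⊓ y) = R x ⊓ R y) (hRe : R e = e) {q s : α} (hq : IsComponent e q)
    (hs : IsLUB (range fun n => R^[n + 1] q) s) : q ≤ s := by
  have hs_comp : IsComponent e s := IsComponent.of_isLUB (fun n => hq.iterate R hR hRe _) hs
  set r := q - q ⊓ s
  have hr0 : 0 ≤ r := sub_nonneg.2 inf_le_left
  have hr_add : q - q ⊓ s + s = q ⊔ s := by
    rw [sub_add_eq_add_sub, ← inf_add_sup q s, add_sub_cancel_left]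
  have hres : r ≤ e - s := le_sub_iff_add_le.2 (hr_add ▸ sup_le hq.2.1 hs_comp.2.1)
  have hrs : r ⊓ s = 0 := inf_eq_zero_mono hr0 hs_comp.1 hres le_rfl hs_comp.2.2
  have hr : r = 0 := by
    refine eq_zero_of_iterate_inf_eq_zero T R hT_pos hT_strict hTR hR hRe hr0
      (hres.trans (sub_le_self _ hs_comp.1)) fun k => ?_
    have hRr_le : R^[k + 1] r ≤ s :=
      ((Monotone.of_map_inf hR).iterate _ (sub_le_self q (le_inf hq.1 hs_comp.1))).trans
        (hs.1 (mem_range_self k))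
    exact inf_eq_zero_mono hr0 (iterate_nonneg_of_map_inf R hR hr0 _) le_rfl hRr_le hrs
  exact inf_eq_left.1 (sub_eq_zero.1 hr).symm

end Recurrence

theorem IsCEPS.injective {E : Type*} [ConditionallyCompleteLattice E] [AddCommGroup E]
    [Module ℝ E] [AddLeftMono E] {T S : E →ₗ[ℝ] E} {e : E} (h : IsCEPS T S e) :
    Injective S := by
  refine (injective_iff_map_eq_zero S).2 fun x hx => ?_
  have hS_abs : S |x| = 0 := by rw [abs, h.S_hom, map_neg, hx, neg_zero, sup_idem]
  have hT_abs : T |x| = 0 := by rw [← h.TS, hS_abs, map_zero]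
  obtain ⟨hx_nonpos, hx_nonneg⟩ := abs_le'.1 (h.T_strictPos _ (abs_nonneg x) hT_abs).le
  exact le_antisymm hx_nonpos (neg_nonpos.1 hx_nonneg)

theorem poincare_recurrence_general {E : Type*} [ConditionallyCompleteLattice E] [AddCommGroup E]
    [Module ℝ E] [CovariantClass E E (· + ·) (· ≤ ·)]
    (T S : E →ₗ[ℝ] E) (e : E) (hCEPS : IsCEPS T S e)
    (hS : Function.Surjective ⇑S)
    (q p : E) (hq : IsComponent e q) (hp : IsComponent q p) :
    ∃ s : E, IsLUB (Set.range fun n : ℕ => (Function.surjInv hS)^[n + 1] q) s ∧ p ≤ s := by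
  set L := LinearEquiv.ofBijective S ⟨hCEPS.injective, hS⟩
  have hL : surjInv hS = L.symm :=
    funext fun x => (L.symm_apply_eq.2 (surjInv_eq hS x).symm).symm
  have hL_inf : ∀ x y, L (x ⊓ y) = L x ⊓ L y := map_inf_of_map_sup L hCEPS.S_hom
  have hR_inf : ∀ x y, L.symm (x ⊓ y) = L.symm x ⊓ L.symm y := fun x y =>
    L.symm_apply_eq.2 (by rw [hL_inf, L.apply_symm_apply, L.apply_symm_apply])
  have hRe : L.symm e = e := L.symm_apply_eq.2 hCEPS.Se.symm
  have hTR : ∀ x, T (L.symm x) = T x := fun x =>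
    (hCEPS.TS _).symm.trans (congrArg T (L.apply_symm_apply x))
  obtain ⟨s, hs⟩ : ∃ s, IsLUB (range fun n => L.symm^[n + 1] q) s :=
    ⟨_, isLUB_csSup (range_nonempty _)
      ⟨e, forall_mem_range.2 fun n => (hq.iterate L.symm hR_inf hRe (n + 1)).2.1⟩⟩
  rw [hL]
  exact ⟨s, hs, hp.2.1.trans
    (hq.le_of_isLUB_iterate T L.symm hCEPS.T_pos hCEPS.T_strictPos hTR hR_inf hRe hs)⟩

/-- **Poincaré recurrence in Riesz spaces:** each component `p` of a component `q` of
`e` is recurrent with respect to `q`: `p ≤ ⨆_{n ≥ 1} S⁻ⁿ q` (the supremum exists). -/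
theorem poincare_recurrence {E : Type*} [ConditionallyCompleteLattice E] [AddCommGroup E]
    [Module ℝ E] [CovariantClass E E (· + ·) (· ≤ ·)] [PosSMulMono ℝ E]
    (T S : E →ₗ[ℝ] E) (e : E) (hCEPS : IsCEPS T S e)
    (hS : Function.Surjective ⇑S)
    (q p : E) (hq : IsComponent e q) (hp : IsComponent q p) :
    ∃ s : E, IsLUB (Set.range fun n : ℕ => (Function.surjInv hS)^[n + 1] q) s ∧ p ≤ s :=
  poincare_recurrence_general T S e hCEPS hS q p hq hp
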